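/- arXiv:1809.06407 — 3 statements merged into one kernel-verified Lean document; each statement's English description precedes it below -/
import Mathlib

section
/- Let G be a simple graph on n vertices with double star sequence S_{i,j}(G) and double star frequency numbers f_{a,b}. Then for 0 ≤ a ≤ n−2: f_{a,a} = ∑_{i=0}^{n−2} ∑_{j=i}^{n−2} (−1)^{i+j} C(i,a) C(j,a) S_{i,j}(G). (Inversion of the double star sequence in the diagonal case.) -/
open Finset

variable {V : Type*} [Fintype V] [DecidableEq V]

/-- Sum over the edges of `G` of a symmetric function of the endpoint degrees. -/
def edgeSum (G : SimpleGraph V) [DecidableRel G.Adj] {R : Type*} [AddCommMonoid R] (f : ℕ → ℕ → R)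
    (hf : ∀ x y, f x y = f y x) : R :=
  ∑ e ∈ G.edgeFinset, Sym2.lift ⟨fun u v => f (G.degree u) (G.degree v),
    fun _ _ => hf _ _⟩ e

/-- The double star sequence `S_{a,b}(G)`. -/
def dstar (G : SimpleGraph V) [DecidableRel G.Adj] (a b : ℕ) : ℕ :=
  if a = b then
    edgeSum G (fun du dv => (du - 1).choose a * (dv - 1).choose a) (fun x y => by ring)
  else
    edgeSum G (fun du dv => (du - 1).choose a * (dv - 1).choose b
      + (du - 1).choose b * (dv - 1).choose a) (fun x y => by ring)

/-- `dfreq G i j` is the number of edges of `G` whose endpoint degrees are `i+1` and `j+1`. -/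
def dfreq (G : SimpleGraph V) [DecidableRel G.Adj] (i j : ℕ) : ℕ :=
  (G.edgeFinset.filter fun e =>
    Sym2.lift ⟨fun u v => ({G.degree u, G.degree v} : Multiset ℕ),
      fun _ _ => Multiset.cons_swap _ _ _⟩ e = ({i + 1, j + 1} : Multiset ℕ)).card

/-- The general second Zagreb index `M₂⁽ᵖ⁾(G)`. -/
def zagreb2 (G : SimpleGraph V) [DecidableRel G.Adj] (p : ℕ) : ℕ :=
  edgeSum G (fun du dv => (du * dv) ^ p) (fun x y => by ring)

/-!
An edge whose endpoint degrees are `x + 1` and `y + 1` contributes to `S_{i,j}` the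
symmetrization of `C(x,i) C(y,j)`. Weighting by `(-1)^(i+j) C(i,a) C(j,a)`, the sum over `i ≤ j`
of the symmetrization is the sum over all pairs `(i, j)`, which factors into two binomial
inversions `∑ᵢ (-1)^i C(i,a) C(x,i) = (-1)^a [x = a]`. So each edge contributes `1` if both its
endpoints have degree `a + 1`, and `0` otherwise.
-/

lemma sum_range_alternating_choose_mul_choose (a x : ℕ) :
    ∑ i ∈ range (x + 1), (-1 : ℤ) ^ i * i.choose a * x.choose i = if x = a then (-1) ^ a else 0 := by
  rcases lt_or_ge x a with hxa | hax
  · rw [if_neg hxa.ne]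
    refine sum_eq_zero fun i hi => ?_
    rw [Nat.choose_eq_zero_of_lt (by grind), Nat.cast_zero, mul_zero, zero_mul]
  obtain ⟨k, rfl⟩ := Nat.exists_eq_add_of_le hax
  have hterm : ∀ i, (-1 : ℤ) ^ (a + i) * (a + i).choose a * (a + k).choose (a + i)
      = (-1) ^ a * (a + k).choose a * ((-1) ^ i * k.choose i) := fun i => by
    have h := Nat.choose_mul (n := a + k) (k := a + i) (s := a) (Nat.le_add_right a i)
    rw [Nat.add_sub_cancel_left, Nat.add_sub_cancel_left] at h
    rw [pow_add]
    linear_combination (-1 : ℤ) ^ a * (-1) ^ i * (by exact_mod_cast h :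
      ((a + k).choose (a + i) : ℤ) * (a + i).choose a = (a + k).choose a * k.choose i)
  rw [show a + k + 1 = a + (k + 1) by ring, sum_range_add, sum_eq_zero fun i hi => by
    rw [Nat.choose_eq_zero_of_lt (mem_range.1 hi), Nat.cast_zero, mul_zero, zero_mul]]
  simp_rw [hterm, ← mul_sum, Int.alternating_sum_range_choose]
  rcases eq_or_ne k 0 with rfl | hk <;> simp [*]

lemma sum_range_alternating_choose_mul_choose_of_lt {M x : ℕ} (a : ℕ) (hx : x < M) :
    ∑ i ∈ range M, (-1 : ℤ) ^ i * i.choose a * x.choose i = if x = a then (-1) ^ a else 0 := by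
  rw [← sum_range_alternating_choose_mul_choose]
  refine (sum_subset (range_subset_range.2 hx) fun i _ hi => ?_).symm
  rw [Nat.choose_eq_zero_of_lt (n := x) (by simpa using hi), Nat.cast_zero, mul_zero]

lemma sum_range_sum_Ico_symmetrize {R : Type*} [AddCommMonoid R] (f : ℕ → ℕ → R) (M : ℕ) :
    ∑ i ∈ range M, ∑ j ∈ Ico i M, (if i = j then f i i else f i j + f j i)
      = ∑ i ∈ range M, ∑ j ∈ range M, f i j := by
  induction M with
  | zero => simp
  | succ M ih =>
    have hrow : ∀ i ∈ range M, ∑ j ∈ Ico i (M + 1), (if i = j then f i i else f i j + f j i)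
        = ∑ j ∈ Ico i M, (if i = j then f i i else f i j + f j i) + (f i M + f M i) :=
      fun i hi => by rw [sum_Ico_succ_top (mem_range.1 hi).le, if_neg (mem_range.1 hi).ne]
    rw [sum_range_succ, sum_congr rfl hrow, sum_add_distrib, ih]
    simp only [sum_add_distrib, Nat.Ico_succ_singleton, sum_singleton, ↓reduceIte, sum_range_succ]
    abel

lemma sum_range_sum_Icc_symmetrize {R : Type*} [AddCommMonoid R] (f : ℕ → ℕ → R) (M : ℕ) :
    ∑ i ∈ range M, ∑ j ∈ Icc i (M - 1), (if i = j then f i i else f i j + f j i)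
      = ∑ i ∈ range M, ∑ j ∈ range M, f i j := by
  rw [← sum_range_sum_Ico_symmetrize]
  refine sum_congr rfl fun i hi => ?_
  rw [Icc_sub_one_right_eq_Ico_of_not_isMin (by simpa using (mem_range.1 hi).ne_bot)]

/-- The contribution of an edge whose endpoints have degrees `x + 1` and `y + 1` to `S_{i,j}`. -/
def dstarTerm (i j x y : ℕ) : ℤ :=
  if i = j then x.choose i * y.choose i else x.choose i * y.choose j + x.choose j * y.choose i

lemma dstarTerm_comm (i j x y : ℕ) : dstarTerm i j x y = dstarTerm i j y x := by
  unfold dstarTerm; split_ifs <;> ring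

lemma sum_alternating_choose_mul_dstarTerm {M x y : ℕ} (a : ℕ) (hx : x < M) (hy : y < M) :
    ∑ i ∈ range M, ∑ j ∈ Icc i (M - 1),
      (-1 : ℤ) ^ (i + j) * i.choose a * j.choose a * dstarTerm i j x y
      = if x = a ∧ y = a then 1 else 0 := by
  set u : ℕ → ℕ → ℤ := fun z i => (-1) ^ i * i.choose a * z.choose i
  have hsymm : ∀ i j, (-1 : ℤ) ^ (i + j) * i.choose a * j.choose a * dstarTerm i j x y
      = if i = j then u x i * u y i else u x i * u y j + u x j * u y i := fun i j => by
    unfold dstarTerm; split_ifs with hij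
    · subst hij; simp only [u, pow_add]; ring
    · simp only [u, pow_add]; ring
  simp_rw [hsymm, sum_range_sum_Icc_symmetrize (fun i j => u x i * u y j), ← sum_mul_sum,
    u, sum_range_alternating_choose_mul_choose_of_lt a hx,
    sum_range_alternating_choose_mul_choose_of_lt a hy]
  split_ifs <;> simp_all [← mul_pow]

lemma Multiset.pair_eq_pair_self_iff {α : Type*} {x y c : α} :
    ({x, y} : Multiset α) = {c, c} ↔ x = c ∧ y = c := by
  rw [show ({c, c} : Multiset α) = Multiset.replicate 2 c from rfl, Multiset.eq_replicate]
  simp [or_imp, forall_and, eq_comm]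

section edgeSum

omit [DecidableEq V]

variable (G : SimpleGraph V) [DecidableRel G.Adj] {R : Type*}

lemma edgeSum_congr [AddCommMonoid R] {f g : ℕ → ℕ → R} (hf : ∀ x y, f x y = f y x)
    (hg : ∀ x y, g x y = g y x)
    (h : ∀ u v, G.Adj u v → f (G.degree u) (G.degree v) = g (G.degree u) (G.degree v)) :
    edgeSum G f hf = edgeSum G g hg := by
  refine sum_congr rfl fun e he => ?_
  induction e using Sym2.ind with
  | _ u v => exact h u v (G.mem_edgeFinset.1 he)

lemma sum_edgeSum [AddCommMonoid R] {ι : Type*} (s : Finset ι) (f : ι → ℕ → ℕ → R)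
    (hf : ∀ k x y, f k x y = f k y x) :
    ∑ k ∈ s, edgeSum G (f k) (hf k)
      = edgeSum G (fun x y => ∑ k ∈ s, f k x y) (fun x y => sum_congr rfl fun k _ => hf k x y) := by
  unfold edgeSum
  rw [sum_comm]
  refine sum_congr rfl fun e _ => ?_
  induction e using Sym2.ind with
  | _ u v => rfl

lemma mul_edgeSum [NonUnitalNonAssocSemiring R] (c : R) (f : ℕ → ℕ → R)
    (hf : ∀ x y, f x y = f y x) :
    c * edgeSum G f hf = edgeSum G (fun x y => c * f x y) (fun x y => by rw [hf]) := by
  unfold edgeSum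
  rw [mul_sum]
  refine sum_congr rfl fun e _ => ?_
  induction e using Sym2.ind with
  | _ u v => rfl

lemma natCast_edgeSum [AddCommMonoidWithOne R] (f : ℕ → ℕ → ℕ) (hf : ∀ x y, f x y = f y x) :
    ((edgeSum G f hf : ℕ) : R) = edgeSum G (fun x y => (f x y : R)) (fun x y => by rw [hf]) := by
  unfold edgeSum
  rw [Nat.cast_sum]
  refine sum_congr rfl fun e _ => ?_
  induction e using Sym2.ind with
  | _ u v => rfl

lemma natCast_dfreq [AddCommMonoidWithOne R] (i j : ℕ) :
    (dfreq G i j : R) = edgeSum G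
      (fun x y => if ({x, y} : Multiset ℕ) = {i + 1, j + 1} then 1 else 0)
      (fun x y => by rw [Multiset.pair_comm]) := by
  unfold dfreq edgeSum
  rw [card_filter, Nat.cast_sum]
  refine sum_congr rfl fun e _ => ?_
  induction e using Sym2.ind with
  | _ u v => simp only [Sym2.lift_mk]; split_ifs <;> simp_all

lemma natCast_dstar (i j : ℕ) :
    (dstar G i j : ℤ) = edgeSum G (fun x y => dstarTerm i j (x - 1) (y - 1))
      (fun _ _ => dstarTerm_comm _ _ _ _) := by
  unfold dstar dstarTerm
  split_ifs <;> rw [natCast_edgeSum] <;> push_cast <;> rfl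

end edgeSum

theorem dfreq_diag_eq_alt_sum_dstar_general (G : SimpleGraph V) [DecidableRel G.Adj]
    (n : ℕ) (hn : n = Fintype.card V) (a : ℕ) :
    (dfreq G a a : ℤ) = ∑ i ∈ Finset.range (n - 1), ∑ j ∈ Finset.Icc i (n - 2),
      (-1 : ℤ) ^ (i + j) * (i.choose a) * (j.choose a) * dstar G i j := by
  simp_rw [natCast_dstar, mul_edgeSum, sum_edgeSum, natCast_dfreq,
    show n - 2 = n - 1 - 1 by omega]
  refine edgeSum_congr G _ _ fun u v huv => ?_
  have hu_pos := G.degree_pos_iff_exists_adj u |>.2 ⟨v, huv⟩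
  have hv_pos := G.degree_pos_iff_exists_adj v |>.2 ⟨u, huv.symm⟩
  have hu_lt := G.degree_lt_card_verts u
  have hv_lt := G.degree_lt_card_verts v
  rw [sum_alternating_choose_mul_dstarTerm a (by omega) (by omega)]
  simp only [Multiset.pair_eq_pair_self_iff]
  split_ifs <;> omega

theorem dfreq_diag_eq_alt_sum_dstar (G : SimpleGraph V) [DecidableRel G.Adj]
    (n : ℕ) (hn : n = Fintype.card V) (a : ℕ) (ha : a ≤ n - 2) :
    (dfreq G a a : ℤ) = ∑ i ∈ Finset.range (n - 1), ∑ j ∈ Finset.Icc i (n - 2),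
      (-1 : ℤ) ^ (i + j) * (i.choose a) * (j.choose a) * dstar G i j :=
  dfreq_diag_eq_alt_sum_dstar_general G n hn a
end

section
/- For any simple graph G, M_2^{(2)}(G) = S_{0,0}(G) + 3 S_{0,1}(G) + 2 S_{0,2}(G) + 9 S_{1,1}(G) + 6 S_{1,2}(G) + 4 S_{2,2}(G), where M_2^{(2)}(G) = ∑_{{u,v}∈E(G)} (d_u d_v)^2. -/
open Finset

variable {V : Type*} [Fintype V] [DecidableEq V]

/-!
For `d ≥ 1` we have `d ^ 2 = C(d-1,0) + 3 C(d-1,1) + 2 C(d-1,2)`, so `(d_u d_v) ^ 2` is the product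
of two such expansions. Its nine terms, grouped symmetrically in `u` and `v`, give `S_{a,b}` with
coefficient `c_a c_b` where `c = (1, 3, 2)`.
-/

theorem Nat.add_one_sq_eq_choose (n : ℕ) :
    (n + 1) ^ 2 = n.choose 0 + 3 * n.choose 1 + 2 * n.choose 2 := by
  induction n with
  | zero => rfl
  | succ n ih =>
    rw [Nat.choose_succ_succ' n 1, Nat.choose_one_right, Nat.choose_one_right,
      Nat.choose_zero_right] at *
    linear_combination ih

theorem sq_eq_choose_sub_one {d : ℕ} (hd : 0 < d) :
    d ^ 2 = (d - 1).choose 0 + 3 * (d - 1).choose 1 + 2 * (d - 1).choose 2 := by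
  simpa [Nat.sub_add_cancel hd] using Nat.add_one_sq_eq_choose (d - 1)

namespace SimpleGraph

omit [DecidableEq V]

variable (G : SimpleGraph V) [DecidableRel G.Adj]

section AddCommMonoid

variable {R : Type*} [AddCommMonoid R] {f g : ℕ → ℕ → R}

theorem edgeSum_congr (hf : ∀ x y, f x y = f y x) (hg : ∀ x y, g x y = g y x)
    (h : ∀ u v, G.Adj u v → f (G.degree u) (G.degree v) = g (G.degree u) (G.degree v)) :
    edgeSum G f hf = edgeSum G g hg := by
  refine Finset.sum_congr rfl fun e he => ?_
  induction e using Sym2.ind with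
  | _ u v => exact h u v (G.mem_edgeFinset.1 he)

theorem edgeSum_add (hf : ∀ x y, f x y = f y x) (hg : ∀ x y, g x y = g y x) :
    edgeSum G (fun x y => f x y + g x y) (fun x y => by rw [hf, hg]) =
      edgeSum G f hf + edgeSum G g hg := by
  rw [edgeSum, edgeSum, edgeSum, ← Finset.sum_add_distrib]
  refine Finset.sum_congr rfl fun e _ => ?_
  induction e using Sym2.ind with
  | _ u v => rfl

end AddCommMonoid

theorem mul_edgeSum {R : Type*} [NonUnitalNonAssocSemiring R] (c : R) {f : ℕ → ℕ → R}
    (hf : ∀ x y, f x y = f y x) :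
    c * edgeSum G f hf = edgeSum G (fun x y => c * f x y) (fun x y => by rw [hf]) := by
  rw [edgeSum, edgeSum, Finset.mul_sum]
  refine Finset.sum_congr rfl fun e _ => ?_
  induction e using Sym2.ind with
  | _ u v => rfl

end SimpleGraph

theorem zagreb2_two_eq (G : SimpleGraph V) [DecidableRel G.Adj] :
    zagreb2 G 2 = dstar G 0 0 + 3 * dstar G 0 1 + 2 * dstar G 0 2
      + 9 * dstar G 1 1 + 6 * dstar G 1 2 + 4 * dstar G 2 2 := by
  simp only [dstar, Nat.reduceEqDiff, ↓reduceIte, G.mul_edgeSum, ← G.edgeSum_add]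
  refine G.edgeSum_congr _ _ fun u v huv => ?_
  have hu := sq_eq_choose_sub_one huv.degree_pos_left
  have hv := sq_eq_choose_sub_one huv.degree_pos_right
  rw [mul_pow, hu, hv]
  ring
end

section
/- Let G be a simple graph on n vertices, let C_{n−1} = { i·j : 0 ≤ i, j ≤ n−1 }, and let [C_{n−1}; i] be the Comtet numbers of the first kind given by ∏_{c∈C_{n−1}}(z−c) = ∑_i [C_{n−1}; i] z^i. Then the general second Zagreb indexes satisfy the linear recurrence M_2^{(N)}(G) = −∑_{i=1}^{N−1} [C_{n−1}; i] M_2^{(i)}(G), where N = |C_{n−1}|. -/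
open Finset

variable {V : Type*} [Fintype V] [DecidableEq V]

open Polynomial in
/-- The Comtet numbers of the first kind associated with a finite set `S` of naturals. -/
noncomputable def comtet (S : Finset ℕ) (i : ℕ) : ℤ :=
  (∏ s ∈ S, (X - C (s : ℤ))).coeff i

/- Every edge weight `d_u d_v` lies in `C_{n-1}`, so it is a root of the monic polynomial
`∏ c ∈ C_{n-1}, (z - c)` of degree `N`, whose constant term vanishes because `0 ∈ C_{n-1}` (for
`n ≥ 1`). Hence `(d_u d_v)^N = -∑_{i=1}^{N-1} [C_{n-1}; i] (d_u d_v)^i` for every edge, and summing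
over the edges gives the recurrence. -/

namespace Polynomial

theorem Monic.pow_natDegree_eq_of_isRoot {R : Type*} [CommRing R] {p : R[X]} (hp : p.Monic)
    {x : R} (hx : p.IsRoot x) :
    x ^ p.natDegree = -∑ i ∈ range p.natDegree, p.coeff i * x ^ i := by
  have h := hx.eq_zero
  rw [hp.as_sum, eval_add, eval_pow, eval_X, eval_finsetSum] at h
  simp only [eval_mul, eval_C, eval_pow, eval_X] at h
  linear_combination h

end Polynomial

open Polynomial

theorem comtet_zero_of_zero_mem {S : Finset ℕ} (h0 : 0 ∈ S) : comtet S 0 = 0 := by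
  rw [comtet, coeff_zero_eq_eval_zero, eval_prod]
  exact prod_eq_zero h0 (by simp)

theorem pow_card_eq_neg_sum_comtet {S : Finset ℕ} (h0 : 0 ∈ S) {x : ℕ} (hx : x ∈ S) :
    (x : ℤ) ^ #S = -∑ i ∈ Icc 1 (#S - 1), comtet S i * (x : ℤ) ^ i := by
  have hroot : (∏ s ∈ S, (X - C (s : ℤ))).IsRoot (x : ℤ) := by
    rw [IsRoot, eval_prod]
    exact prod_eq_zero hx (by simp)
  have key : (x : ℤ) ^ #S = -∑ i ∈ range #S, comtet S i * (x : ℤ) ^ i := by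
    have h := (monic_prod_X_sub_C _ S).pow_natDegree_eq_of_isRoot hroot
    rwa [natDegree_finsetProd_X_sub_C_eq_card] at h
  obtain ⟨N, hN⟩ : ∃ N, #S = N + 1 := Nat.exists_eq_add_one.2 (card_pos.2 ⟨0, h0⟩)
  rw [key, hN, sum_range_succ', Nat.add_sub_cancel, ← Ico_add_one_right_eq_Icc,
    sum_Ico_eq_sum_range]
  simp [add_comm 1, comtet_zero_of_zero_mem h0]

theorem sum_pow_card_eq_neg_sum_comtet {ι : Type*} {S : Finset ℕ} (h0 : 0 ∈ S) (s : Finset ι)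
    {w : ι → ℕ} (hw : ∀ e ∈ s, w e ∈ S) :
    ∑ e ∈ s, (w e : ℤ) ^ #S = -∑ i ∈ Icc 1 (#S - 1), comtet S i * ∑ e ∈ s, (w e : ℤ) ^ i := by
  rw [sum_congr rfl fun e he => pow_card_eq_neg_sum_comtet h0 (hw e he), sum_neg_distrib,
    sum_comm]
  simp only [mul_sum]

namespace SimpleGraph

variable (G : SimpleGraph V) [DecidableRel G.Adj]

def degreeProd (e : Sym2 V) : ℕ :=
  Sym2.lift ⟨fun u v => G.degree u * G.degree v, fun _ _ => mul_comm _ _⟩ e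

omit [DecidableEq V] in
theorem zagreb2_eq_sum_degreeProd_pow (p : ℕ) :
    zagreb2 G p = ∑ e ∈ G.edgeFinset, G.degreeProd e ^ p := by
  refine sum_congr rfl fun e _ => ?_
  induction e using Sym2.ind
  rfl

omit [DecidableEq V] in
theorem degreeProd_mem_image_mul (e : Sym2 V) :
    G.degreeProd e ∈ (range (Fintype.card V) ×ˢ range (Fintype.card V)).image
      fun p => p.1 * p.2 := by
  induction e using Sym2.ind with
  | h u v => exact mem_image.2 ⟨(G.degree u, G.degree v), by simp [G.degree_lt_card_verts], rfl⟩

end SimpleGraph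

theorem zagreb2_recurrence (G : SimpleGraph V) [DecidableRel G.Adj]
    (n : ℕ) (hn : n = Fintype.card V)
    (Cset : Finset ℕ) (hC : Cset = (Finset.range n ×ˢ Finset.range n).image fun p => p.1 * p.2)
    (N : ℕ) (hN : N = Cset.card) :
    (zagreb2 G N : ℤ) = -∑ i ∈ Finset.Icc 1 (N - 1), comtet Cset i * zagreb2 G i := by
  subst hn hC hN
  rcases isEmpty_or_nonempty V with hV | hV
  · simp [G.zagreb2_eq_sum_degreeProd_pow, eq_empty_of_isEmpty G.edgeFinset]
  have h0 : 0 ∈ (range (Fintype.card V) ×ˢ range (Fintype.card V)).image fun p => p.1 * p.2 :=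
    mem_image.2 ⟨(0, 0), by simp [Fintype.card_pos], rfl⟩
  simp only [G.zagreb2_eq_sum_degreeProd_pow, Nat.cast_sum, Nat.cast_pow]
  exact sum_pow_card_eq_neg_sum_comtet h0 _ fun e _ => G.degreeProd_mem_image_mul e
end
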